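/- Let G be a finite simple graph with n vertices and m edges. The F-index of the t-thorny graph Gᵗ (obtained by attaching t pendent vertices to each vertex of G) is F(Gᵗ) = F(G) + 3tM₁(G) + 6mt² + nt³ + nt. -/

import Mathlib

open Finset

/-- Degree of a vertex: the number of its neighbors. -/
noncomputable def degN {V : Type*} (G : SimpleGraph V) (v : V) : ℕ :=
  Nat.card (G.neighborSet v)

/-- F-index: the sum of cubes of the vertex degrees. -/
noncomputable def Findex {V : Type*} [Fintype V] (G : SimpleGraph V) : ℕ :=
  ∑ v, (degN G v) ^ 3

/-- First Zagreb index: the sum of squares of the vertex degrees. -/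
noncomputable def zagrebM1 {V : Type*} [Fintype V] (G : SimpleGraph V) : ℕ :=
  ∑ v, (degN G v) ^ 2

/-- Number of edges of a graph. -/
noncomputable def numEdges {V : Type*} (G : SimpleGraph V) : ℕ :=
  Nat.card G.edgeSet

/-- Corona product of two simple graphs: one copy of `G₁` and, for each vertex
`i` of `G₁`, a copy of `G₂` whose vertices are all joined to `i`. -/
def graphCorona {V₁ V₂ : Type*} (G₁ : SimpleGraph V₁) (G₂ : SimpleGraph V₂) :
    SimpleGraph (V₁ ⊕ V₁ × V₂) where
  Adj x y :=
    match x, y with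
    | .inl u, .inl v => G₁.Adj u v
    | .inl u, .inr p => u = p.1
    | .inr p, .inl u => p.1 = u
    | .inr p, .inr q => p.1 = q.1 ∧ G₂.Adj p.2 q.2
  symm := by
    constructor
    rintro (u | p) (v | q) h
    · exact h.symm
    · exact h.symm
    · exact h.symm
    · exact ⟨h.1.symm, h.2.symm⟩
  loopless := by
    constructor
    rintro (u | p) h
    · exact G₁.loopless.irrefl u h
    · exact G₂.loopless.irrefl p.2 h.2

/-!
In a corona product every copy of `G₂` hangs from a single vertex of `G₁`, so the degrees
simply add: a vertex `u` of `G₁` gets degree `d(u) + |V₂|` and a vertex `w` of a copy of `G₂`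
gets `d(w) + 1`. For `G₂` edgeless on `t` vertices, expanding `(d(u) + t)³` and summing gives
`F(G) + 3t M₁(G) + 3t² Σ d(u) + n t³`, the handshake lemma turns `Σ d(u)` into `2m`, and the
`n t` pendant vertices contribute `1` each.
-/
namespace graphCorona

variable {V₁ V₂ : Type*} (G₁ : SimpleGraph V₁) (G₂ : SimpleGraph V₂)

def neighborSetInlEquiv (u : V₁) :
    (graphCorona G₁ G₂).neighborSet (.inl u) ≃ G₁.neighborSet u ⊕ V₂ where
  toFun
    | ⟨.inl v, h⟩ => .inl ⟨v, h⟩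
    | ⟨.inr p, _⟩ => .inr p.2
  invFun
    | .inl ⟨v, h⟩ => ⟨.inl v, h⟩
    | .inr w => ⟨.inr (u, w), rfl⟩
  left_inv := by
    rintro ⟨v | ⟨u', w⟩, h⟩
    · rfl
    · obtain rfl : u = u' := h
      rfl
  right_inv := by
    rintro (⟨v, h⟩ | w) <;> rfl

def neighborSetInrEquiv (p : V₁ × V₂) :
    (graphCorona G₁ G₂).neighborSet (.inr p) ≃ Option (G₂.neighborSet p.2) where
  toFun
    | ⟨.inl _, _⟩ => none
    | ⟨.inr q, h⟩ => some ⟨q.2, h.2⟩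
  invFun
    | none => ⟨.inl p.1, rfl⟩
    | some ⟨w, h⟩ => ⟨.inr (p.1, w), rfl, h⟩
  left_inv := by
    rintro ⟨v | ⟨u', w⟩, h⟩
    · obtain rfl : p.1 = v := h
      rfl
    · obtain rfl : p.1 = u' := h.1
      rfl
  right_inv := by
    rintro (_ | ⟨w, h⟩) <;> rfl

theorem degN_inl [G₁.LocallyFinite] [Finite V₂] (u : V₁) :
    degN (graphCorona G₁ G₂) (.inl u) = degN G₁ u + Nat.card V₂ := by
  rw [degN, Nat.card_congr (neighborSetInlEquiv G₁ G₂ u), Nat.card_sum, degN]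

theorem degN_inr [G₂.LocallyFinite] (p : V₁ × V₂) :
    degN (graphCorona G₁ G₂) (.inr p) = degN G₂ p.2 + 1 := by
  rw [degN, Nat.card_congr (neighborSetInrEquiv G₁ G₂ p), Finite.card_option, degN]

end graphCorona

theorem degN_bot {V : Type*} (v : V) : degN (⊥ : SimpleGraph V) v = 0 := by
  rw [degN, SimpleGraph.neighborSet_bot, Nat.card_of_isEmpty]

theorem degN_eq_degree {V : Type*} (G : SimpleGraph V) (v : V) [Fintype (G.neighborSet v)] :
    degN G v = G.degree v := by
  rw [degN, Nat.card_eq_fintype_card, SimpleGraph.card_neighborSet_eq_degree]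

theorem sum_degN_eq_two_mul_numEdges {V : Type*} [Fintype V] (G : SimpleGraph V) :
    ∑ v, degN G v = 2 * numEdges G := by
  classical
  rw [numEdges, Nat.card_eq_fintype_card, ← SimpleGraph.edgeFinset_card,
    ← G.sum_degrees_eq_twice_card_edges]
  exact sum_congr rfl fun v _ => degN_eq_degree G v

theorem Findex_thorny {V : Type*} [Fintype V] (G : SimpleGraph V) (t : ℕ)
    (n m : ℕ) (hn : Fintype.card V = n) (hm : numEdges G = m) :
    Findex (graphCorona G (⊥ : SimpleGraph (Fin t))) =
      Findex G + 3 * t * zagrebM1 G + 6 * m * t ^ 2 + n * t ^ 3 + n * t := by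
  classical
  subst hn hm
  simp only [Findex, zagrebM1, Fintype.sum_sum_type, graphCorona.degN_inl,
    graphCorona.degN_inr, degN_bot, Nat.card_eq_fintype_card, Fintype.card_fin]
  have hexpand : ∀ v, (degN G v + t) ^ 3 =
      degN G v ^ 3 + 3 * t * degN G v ^ 2 + 3 * t ^ 2 * degN G v + t ^ 3 := fun v => by ring
  simp only [hexpand, sum_add_distrib, ← mul_sum, sum_degN_eq_two_mul_numEdges, sum_const, card_univ,
    Fintype.card_prod, Fintype.card_fin, smul_eq_mul]
  ring
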